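/- arXiv:1408.4654 — 2 statements merged into one kernel-verified Lean document; each statement's English description precedes it below -/
import Mathlib

section
/- For p ≥ 3 and real numbers a, b, one has |a + b|^p ≥ |a|^p + |b|^p + p·|a|^{p-2}·a·b + p·|b|^{p-2}·b·a whenever |b| ≤ |a|, and hence (using symmetry of the right-hand side in a and b) for all real a, b. -/
/-!
By the symmetries `a ↔ b` and `(a, b) ↦ (-a, -b)` one may assume `0 ≤ a` and `|b| ≤ a`. Then the
claim is one of two inequalities between powers of nonnegative reals, `x, y ≥ 0` resp.
`0 ≤ y ≤ x`:
`(x + y)^p ≥ x^p + y^p + p x^{p-1} y + p y^{p-1} x`,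
`(x - y)^p ≥ x^p + y^p - p x^{p-1} y - p y^{p-1} x`.
Each is proved by differentiating the defect in one variable. For the first, the derivative is
`p` times the defect of the weaker inequality `(x + y)^q ≥ x^q + y^q + q x^{q-1} y` at `q = p - 1`,
which is handled the same way, down to Bernoulli's inequality. For the second, the derivative is
nonnegative because `t ↦ t^{p-1}` is monotone and `t^{p-1} ≤ t^{p-2} x` for `t ≤ x`.
-/

open Real Set

lemma le_of_hasDerivAt_nonneg {f f' : ℝ → ℝ} {a b : ℝ} (hab : a ≤ b)
    (hf : ∀ t, HasDerivAt f (f' t) t) (hf' : ∀ t ∈ Ioo a b, 0 ≤ f' t) : f a ≤ f b := by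
  have hmono : MonotoneOn f (Icc a b) :=
    monotoneOn_of_hasDerivWithinAt_nonneg (convex_Icc a b)
      (continuous_iff_continuousAt.2 fun t => (hf t).continuousAt).continuousOn
      (fun t _ => (hf t).hasDerivWithinAt) (by rwa [interior_Icc])
  exact hmono (left_mem_Icc.2 hab) (right_mem_Icc.2 hab) hab

lemma rpow_add_mul_rpow_sub_one_mul_le_add_rpow {r x y : ℝ} (hr : 1 ≤ r) (hx : 0 < x)
    (hy : 0 ≤ y) : x ^ r + r * x ^ (r - 1) * y ≤ (x + y) ^ r := by
  have hbernoulli : 1 + r * (y / x) ≤ (1 + y / x) ^ r :=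
    one_add_mul_self_le_rpow_one_add (by linarith [div_nonneg hy hx.le]) hr
  calc x ^ r + r * x ^ (r - 1) * y = x ^ r * (1 + r * (y / x)) := by
        rw [rpow_sub_one hx.ne']; field_simp
    _ ≤ x ^ r * (1 + y / x) ^ r := by gcongr
    _ = (x + y) ^ r := by
        rw [← mul_rpow hx.le (by positivity), mul_add, mul_one, mul_div_cancel₀ _ hx.ne']

lemma rpow_add_rpow_add_mul_rpow_sub_one_mul_le_add_rpow {q x y : ℝ} (hq : 2 ≤ q)
    (hx : 0 ≤ x) (hy : 0 ≤ y) : x ^ q + y ^ q + q * x ^ (q - 1) * y ≤ (x + y) ^ q := by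
  have hf : ∀ t, HasDerivAt (fun t => (t + y) ^ q - t ^ q - y ^ q - q * t ^ (q - 1) * y)
      (q * ((t + y) ^ (q - 1) - (t ^ (q - 1) + (q - 1) * t ^ (q - 1 - 1) * y))) t := by
    intro t
    have h₁ := ((hasDerivAt_id' t).add_const y).rpow_const (p := q) (Or.inr (by linarith))
    have h₂ := hasDerivAt_rpow_const (x := t) (p := q) (Or.inr (by linarith))
    have h₃ := hasDerivAt_rpow_const (x := t) (p := q - 1) (Or.inr (by linarith))
    exact (((h₁.sub h₂).sub_const _).sub ((h₃.const_mul q).mul_const y)).congr_deriv (by ring)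
  have hmono := le_of_hasDerivAt_nonneg hx hf fun t ht => mul_nonneg (by linarith)
    (sub_nonneg.2 (rpow_add_mul_rpow_sub_one_mul_le_add_rpow (by linarith) ht.1 hy))
  simp only [zero_add, zero_rpow (by linarith : q ≠ 0), zero_rpow (by linarith : q - 1 ≠ 0)]
    at hmono
  linarith

lemma rpow_add_rpow_add_cross_le_add_rpow {p x y : ℝ} (hp : 3 ≤ p) (hx : 0 ≤ x) (hy : 0 ≤ y) :
    x ^ p + y ^ p + p * x ^ (p - 1) * y + p * y ^ (p - 1) * x ≤ (x + y) ^ p := by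
  have hf : ∀ t, HasDerivAt
      (fun t => (t + y) ^ p - t ^ p - y ^ p - p * t ^ (p - 1) * y - p * y ^ (p - 1) * t)
      (p * ((t + y) ^ (p - 1) - (t ^ (p - 1) + y ^ (p - 1) + (p - 1) * t ^ (p - 1 - 1) * y)))
      t := by
    intro t
    have h₁ := ((hasDerivAt_id' t).add_const y).rpow_const (p := p) (Or.inr (by linarith))
    have h₂ := hasDerivAt_rpow_const (x := t) (p := p) (Or.inr (by linarith))
    have h₃ := hasDerivAt_rpow_const (x := t) (p := p - 1) (Or.inr (by linarith))
    exact ((((h₁.sub h₂).sub_const _).sub ((h₃.const_mul p).mul_const y)).sub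
      ((hasDerivAt_id' t).const_mul (p * y ^ (p - 1)))).congr_deriv (by ring)
  have hmono := le_of_hasDerivAt_nonneg hx hf fun t ht => mul_nonneg (by linarith)
    (sub_nonneg.2 (rpow_add_rpow_add_mul_rpow_sub_one_mul_le_add_rpow (by linarith) ht.1.le hy))
  simp only [zero_add, zero_rpow (by linarith : p ≠ 0), zero_rpow (by linarith : p - 1 ≠ 0)]
    at hmono
  linarith

lemma rpow_add_rpow_sub_cross_le_sub_rpow {p x y : ℝ} (hp : 2 ≤ p) (hy : 0 ≤ y) (hyx : y ≤ x) :
    x ^ p + y ^ p - p * x ^ (p - 1) * y - p * y ^ (p - 1) * x ≤ (x - y) ^ p := by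
  have hg : ∀ t, HasDerivAt
      (fun t => (x - t) ^ p - x ^ p - t ^ p + p * x ^ (p - 1) * t + p * t ^ (p - 1) * x)
      (p * ((x ^ (p - 1) - (x - t) ^ (p - 1)) + ((p - 1) * t ^ (p - 1 - 1) * x - t ^ (p - 1))))
      t := by
    intro t
    have h₁ := ((hasDerivAt_id' t).const_sub x).rpow_const (p := p) (Or.inr (by linarith))
    have h₂ := hasDerivAt_rpow_const (x := t) (p := p) (Or.inr (by linarith))
    have h₃ := hasDerivAt_rpow_const (x := t) (p := p - 1) (Or.inr (by linarith))
    exact ((((h₁.sub_const _).sub h₂).add ((hasDerivAt_id' t).const_mul (p * x ^ (p - 1)))).add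
      ((h₃.const_mul p).mul_const x)).congr_deriv (by ring)
  have hg' : ∀ t ∈ Ioo 0 y, 0 ≤ p * ((x ^ (p - 1) - (x - t) ^ (p - 1))
      + ((p - 1) * t ^ (p - 1 - 1) * x - t ^ (p - 1))) := by
    rintro t ⟨ht, hty⟩
    have hpow : 0 ≤ t ^ (p - 1 - 1) := rpow_nonneg ht.le _
    have hdecr : (x - t) ^ (p - 1) ≤ x ^ (p - 1) :=
      rpow_le_rpow (by linarith) (by linarith) (by linarith)
    have hsmall : t ^ (p - 1) ≤ (p - 1) * t ^ (p - 1 - 1) * x := calc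
      t ^ (p - 1) = t ^ (p - 1 - 1) * t := by
          rw [rpow_sub_one ht.ne' (p - 1), div_mul_cancel₀ _ ht.ne']
      _ ≤ t ^ (p - 1 - 1) * x := by gcongr; linarith
      _ ≤ (p - 1) * t ^ (p - 1 - 1) * x := by nlinarith [mul_nonneg hpow (by linarith : 0 ≤ x)]
    nlinarith
  have hmono := le_of_hasDerivAt_nonneg hy hg hg'
  simp only [sub_zero, zero_rpow (by linarith : p ≠ 0), zero_rpow (by linarith : p - 1 ≠ 0)]
    at hmono
  linarith

lemma sign_mul_abs_rpow_of_nonneg {a r : ℝ} (ha : 0 ≤ a) (hr : r ≠ 0) :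
    sign a * |a| ^ r = a ^ r := by
  rcases ha.eq_or_lt with rfl | ha
  · simp [zero_rpow hr]
  · rw [sign_of_pos ha, abs_of_pos ha, one_mul]

theorem abs_add_rpow_ge_of_abs_le {p a b : ℝ} (hp : 3 ≤ p) (hba : |b| ≤ |a|) :
    |a + b| ^ p ≥ |a| ^ p + |b| ^ p + p * (sign a * |a| ^ (p - 1)) * b
      + p * (sign b * |b| ^ (p - 1)) * a := by
  wlog ha : 0 ≤ a generalizing a b
  · have h := this (a := -a) (b := -b) (by simpa only [abs_neg]) (by linarith)
    simp only [← neg_add, abs_neg, Real.sign_neg] at h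
    linarith
  rw [abs_of_nonneg ha] at hba
  have hp₁ : p - 1 ≠ 0 := by linarith
  rcases le_or_gt 0 b with hb | hb
  · rw [sign_mul_abs_rpow_of_nonneg ha hp₁, sign_mul_abs_rpow_of_nonneg hb hp₁, abs_of_nonneg ha,
      abs_of_nonneg hb, abs_of_nonneg (add_nonneg ha hb)]
    linarith [rpow_add_rpow_add_cross_le_add_rpow hp ha hb]
  · have h := rpow_add_rpow_sub_cross_le_sub_rpow (p := p) (x := a) (y := -b) (by linarith)
      (by linarith) (by rwa [← abs_of_neg hb])
    rw [sign_mul_abs_rpow_of_nonneg ha hp₁, sign_of_neg hb, abs_of_nonneg ha, abs_of_neg hb,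
      abs_of_nonneg (by linarith [neg_abs_le b])]
    rw [sub_neg_eq_add] at h
    linarith

theorem stmt5 (p a b : ℝ) (hp : 3 ≤ p) :
    |a + b| ^ p ≥ |a| ^ p + |b| ^ p + p * (Real.sign a * |a| ^ (p - 1)) * b
      + p * (Real.sign b * |b| ^ (p - 1)) * a := by
  rcases le_total |b| |a| with hba | hab
  · exact abs_add_rpow_ge_of_abs_le hp hba
  · have h := abs_add_rpow_ge_of_abs_le hp hab
    rw [add_comm b a] at h
    linarith
end

section
/- For p ∈ (1,3) the function t ↦ |1+t|^p - 1 - |t|^p - p|t|^{p-2}t - pt attains strictly negative values on [-1,1]. -/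
lemma two_rpow_lt (p : ℝ) (hp1 : 1 < p) (hp3 : p < 3) : (2:ℝ) ^ p < 3 * p - 1 := by
  have hlog : Real.log 2 ≠ 0 := ne_of_gt (Real.log_pos (by norm_num))
  set s : ℝ := (p - 1) / 2 with hs
  have hs0 : 0 < s := by rw [hs]; linarith
  have hs1 : s < 1 := by rw [hs]; linarith
  have h := strictConvexOn_exp.2 (Set.mem_univ (Real.log 2))
    (Set.mem_univ (3 * Real.log 2))
    (by intro h; apply hlog; linarith)
    (show (0:ℝ) < 1 - s by linarith) hs0 (by ring)
  have e1 : (1 - s) • Real.log 2 + s • (3 * Real.log 2) = p * Real.log 2 := by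
    simp only [smul_eq_mul]; rw [hs]; ring
  have e2 : Real.exp (Real.log 2) = 2 := Real.exp_log (by norm_num)
  have e3 : Real.exp (3 * Real.log 2) = 8 := by
    rw [show (3:ℝ) * Real.log 2 = Real.log 2 + (Real.log 2 + Real.log 2) by ring,
      Real.exp_add, Real.exp_add, e2]; norm_num
  rw [e1, e2, e3, smul_eq_mul, smul_eq_mul] at h
  have : (2:ℝ) ^ p = Real.exp (p * Real.log 2) := by
    rw [Real.rpow_def_of_pos (by norm_num)]; ring_nf
  rw [this]
  calc Real.exp (p * Real.log 2) < (1 - s) * 2 + s * 8 := h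
    _ = 3 * p - 1 := by rw [hs]; ring

theorem stmt13 (p : ℝ) (hp1 : 1 < p) (hp3 : p < 3) :
    ∃ t : ℝ, |t| ≤ 1 ∧
      |1 + t| ^ p - 1 - |t| ^ p - p * (Real.sign t * |t| ^ (p - 1)) - p * t < 0 := by
  refine ⟨1, by norm_num, ?_⟩
  have h1 : Real.sign (1:ℝ) = 1 := Real.sign_of_pos one_pos
  have h2 : |(1:ℝ)| = 1 := abs_one
  have h3 : |(1:ℝ) + 1| = 2 := by norm_num
  rw [h1, h2, h3, Real.one_rpow, Real.one_rpow]
  have := two_rpow_lt p hp1 hp3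
  nlinarith
end
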